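/- arXiv:1608.02881 — 6 statements merged into one kernel-verified Lean document; each statement's English description precedes it below -/
import Mathlib

section
/- The undirected torus expansion conjecture of Linial–London is false: for every constant c > 0 there exists a measurable set A ⊆ 𝕋² = ℝ²/ℤ² with 0 < m(A) ≤ c such that m(A ∪ σ₁(A) ∪ σ₂(A) ∪ σ₁⁻¹(A) ∪ σ₂⁻¹(A)) < 2·m(A), where m denotes the Haar (Lebesgue) probability measure on 𝕋². -/
open MeasureTheory

/-- The torus `𝕋² = ℝ²/ℤ²`, modeled as a product of two unit circles. -/
abbrev Torus : Type := AddCircle (1 : ℝ) × AddCircle (1 : ℝ)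

/-- The natural projection `π : ℝ² → 𝕋²`. -/
noncomputable def torusProj (p : ℝ × ℝ) : Torus :=
  ((p.1 : AddCircle (1 : ℝ)), (p.2 : AddCircle (1 : ℝ)))

/-- Action of `σ₁ = [[1,1],[0,1]]` on the torus, induced by its linear action on `ℝ²`. -/
noncomputable def sigma1 (p : Torus) : Torus := (p.1 + p.2, p.2)

/-- Action of `σ₂ = [[1,0],[1,1]]` on the torus. -/
noncomputable def sigma2 (p : Torus) : Torus := (p.1, p.1 + p.2)

/-- Action of `σ₁⁻¹ = [[1,-1],[0,1]]` on the torus. -/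
noncomputable def sigma1inv (p : Torus) : Torus := (p.1 - p.2, p.2)

/-- Action of `σ₂⁻¹ = [[1,0],[-1,1]]` on the torus. -/
noncomputable def sigma2inv (p : Torus) : Torus := (p.1, p.2 - p.1)

/-!
Take a symmetric arc `J` of small measure `a` and let `A = (J × 𝕋) ∪ (𝕋 × J)` be the cross
over it, of measure `a + a(1 - a)`. The shears `σ₁^{±1}` fix the horizontal band `𝕋 × J` and
send the vertical band `J × 𝕋` to the diagonal bands `{x ∓ y ∈ J}`; the shears `σ₂^{±1}` do
the same with the roles of the two bands exchanged. So `A` and its four images lie in the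
union of the two coordinate bands and the two diagonal bands. Each of these bands other than
`𝕋 × J` meets the complement of `𝕋 × J` in measure `a(1 - a)`, so the union has measure at
most `a + 3a(1 - a) < 2(a + a(1 - a))`.
-/

namespace TorusExpansion

theorem measure_union_le_add_diff {α : Type*} [MeasurableSpace α] (μ : Measure α)
    (s t u v : Set α) : μ (s ∪ t ∪ u ∪ v) ≤ μ s + μ (t \ s) + μ (u \ s) + μ (v \ s) := by
  have h : s ∪ t ∪ u ∪ v = s ∪ (t \ s) ∪ (u \ s) ∪ (v \ s) := by
    ext; simp only [Set.mem_union, Set.mem_sdiff]; tauto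
  rw [h]
  refine (measure_union_le _ _).trans (add_le_add_left ?_ _)
  refine (measure_union_le _ _).trans (add_le_add_left ?_ _)
  exact measure_union_le _ _

variable {G : Type*}

def cross (J : Set G) : Set (G × G) := {p | p.1 ∈ J ∨ p.2 ∈ J}

def shearNbhd [AddGroup G] (A : Set (G × G)) : Set (G × G) :=
  A ∪ (fun p : G × G => (p.1 + p.2, p.2)) '' A ∪ (fun p : G × G => (p.1, p.1 + p.2)) '' A
    ∪ (fun p : G × G => (p.1 - p.2, p.2)) '' A ∪ (fun p : G × G => (p.1, p.2 - p.1)) '' A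

theorem shearNbhd_cross_subset [AddCommGroup G] {J : Set G} (hJ_neg : ∀ x ∈ J, -x ∈ J) :
    shearNbhd (cross J) ⊆
      {p | p.2 ∈ J} ∪ {p | p.1 ∈ J} ∪ {p | p.1 - p.2 ∈ J} ∪ {p | p.1 + p.2 ∈ J} := by
  rintro _ ((((h | ⟨q, h, rfl⟩) | ⟨q, h, rfl⟩) | ⟨q, h, rfl⟩) | ⟨q, h, rfl⟩) <;>
    rcases h with h | h <;> simp [h, hJ_neg]

section Measure

variable [MeasurableSpace G] {μ : Measure G} [IsProbabilityMeasure μ] {J : Set G}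

theorem measurableSet_cross (hJ : MeasurableSet J) : MeasurableSet (cross J) :=
  (measurable_fst hJ).union (measurable_snd hJ)

theorem measure_horizontal_band : (μ.prod μ) {p | p.2 ∈ J} = μ J := by
  have h : {p : G × G | p.2 ∈ J} = Set.univ ×ˢ J := by ext; simp
  rw [h, Measure.prod_prod, measure_univ, one_mul]

theorem measure_band_diff_horizontal_band {f : G × G → G × G}
    (hf : MeasurePreserving f (μ.prod μ) (μ.prod μ)) (hf_snd : ∀ p, (f p).2 = p.2)
    (hJ : MeasurableSet J) :
    (μ.prod μ) ({p | (f p).1 ∈ J} \ {p | p.2 ∈ J}) = μ J * μ Jᶜ := by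
  have h : {p | (f p).1 ∈ J} \ {p | p.2 ∈ J} = f ⁻¹' (J ×ˢ Jᶜ) := by
    ext p; simp [hf_snd]
  rw [h, hf.measure_preimage (hJ.prod hJ.compl).nullMeasurableSet, Measure.prod_prod]

theorem measure_cross (hJ : MeasurableSet J) :
    (μ.prod μ) (cross J) = μ J + μ J * μ Jᶜ := by
  have h : cross J = {p | p.2 ∈ J} ∪ ({p | p.1 ∈ J} \ {p | p.2 ∈ J}) := by
    ext; simp only [cross, Set.mem_union, Set.mem_sdiff, Set.mem_ofPred_eq]; tauto
  have hV : MeasurableSet ({p : G × G | p.1 ∈ J} \ {p | p.2 ∈ J}) :=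
    (measurable_fst hJ).diff (measurable_snd hJ)
  rw [h, measure_union Set.disjoint_sdiff_right hV, measure_horizontal_band,
    measure_band_diff_horizontal_band (f := fun p => p) (MeasurePreserving.id _) (fun _ => rfl) hJ]

theorem measure_cross_le_two_mul (hJ : MeasurableSet J) : (μ.prod μ) (cross J) ≤ 2 * μ J := by
  rw [measure_cross hJ, two_mul]
  gcongr
  exact mul_le_of_le_one_right' prob_le_one

theorem measure_shearNbhd_cross_lt [AddCommGroup G] [MeasurableAdd₂ G] [MeasurableNeg G]
    [μ.IsAddRightInvariant] (hJ : MeasurableSet J) (hJ_neg : ∀ x ∈ J, -x ∈ J)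
    (hJ_pos : 0 < μ J) :
    (μ.prod μ) (shearNbhd (cross J)) < 2 * (μ.prod μ) (cross J) := by
  set a := μ J
  set b := μ Jᶜ
  have h_band (f) (hf : MeasurePreserving f (μ.prod μ) (μ.prod μ)) (hf_snd : ∀ p, (f p).2 = p.2) :=
    measure_band_diff_horizontal_band hf hf_snd hJ
  have h_le : (μ.prod μ) (shearNbhd (cross J)) ≤ a + a * b + a * b + a * b := by
    refine (measure_mono (shearNbhd_cross_subset hJ_neg)).trans ?_
    refine (measure_union_le_add_diff _ _ _ _ _).trans_eq ?_
    rw [measure_horizontal_band,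
      h_band (fun p => p) (MeasurePreserving.id _) (fun _ => rfl),
      h_band _ (measurePreserving_sub_prod μ μ) (fun _ => rfl),
      h_band _ (measurePreserving_add_prod μ μ) (fun _ => rfl)]
  have h_ab : a * b < a := by
    have hb : b < 1 := by
      rw [show b = 1 - a from prob_compl_eq_one_sub hJ]
      exact ENNReal.sub_lt_self ENNReal.one_ne_top one_ne_zero hJ_pos.ne'
    calc a * b < a * 1 := by gcongr; exact measure_ne_top μ J
      _ = a := mul_one a
  have hab_ne_top : a * b ≠ ⊤ := ENNReal.mul_ne_top (measure_ne_top μ J) (measure_ne_top μ _)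
  calc _ ≤ a + a * b + a * b + a * b := h_le
    _ = (a + a * b) + (a * b + a * b) := by ring
    _ < (a + a * b) + (a + a * b) := by
      gcongr
      exact ENNReal.add_ne_top.2 ⟨measure_ne_top μ J, hab_ne_top⟩
    _ = 2 * (μ.prod μ) (cross J) := by rw [measure_cross hJ, two_mul]

end Measure

end TorusExpansion

open TorusExpansion

instance : IsProbabilityMeasure (volume : Measure (AddCircle (1 : ℝ))) :=
  ⟨by simp [AddCircle.measure_univ]⟩

/-- The undirected torus expansion conjecture of Linial–London is false. -/
theorem undirected_torus_expansion_conjecture_false :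
    ∀ c : ℝ, 0 < c →
      ∃ A : Set Torus, MeasurableSet A ∧ 0 < volume A ∧ volume A ≤ ENNReal.ofReal c ∧
        volume (A ∪ sigma1 '' A ∪ sigma2 '' A ∪ sigma1inv '' A ∪ sigma2inv '' A)
          < 2 * volume A := by
  intro c hc
  set J : Set (AddCircle (1 : ℝ)) := Metric.closedBall 0 (c / 4)
  have hJ : MeasurableSet J := Metric.isClosed_closedBall.measurableSet
  have hJ_neg : ∀ x ∈ J, -x ∈ J := fun x hx => by simpa [J] using hx
  have hJ_vol : volume J = ENNReal.ofReal (min 1 (c / 2)) := by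
    rw [AddCircle.volume_closedBall]; ring_nf
  have hJ_pos : 0 < volume J := by
    rw [hJ_vol]; exact ENNReal.ofReal_pos.mpr (lt_min one_pos (half_pos hc))
  have hJ_le : 2 * volume J ≤ ENNReal.ofReal c := by
    rw [hJ_vol, ← ENNReal.ofReal_ofNat 2, ← ENNReal.ofReal_mul zero_le_two]
    exact ENNReal.ofReal_le_ofReal (by linarith [min_le_right 1 (c / 2)])
  refine ⟨cross J, measurableSet_cross hJ, ?_, (measure_cross_le_two_mul hJ).trans hJ_le,
    measure_shearNbhd_cross_lt hJ hJ_neg hJ_pos⟩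
  exact hJ_pos.trans_le (measure_cross (μ := volume) hJ ▸ le_self_add)
end

section
/- For every ε with 0 < ε < 1/10, the set C_U = π({(x,y) ∈ ℝ² : |x| ≤ ε or |y| ≤ ε}) satisfies m(C_U ∪ σ₁(C_U) ∪ σ₂(C_U) ∪ σ₁⁻¹(C_U) ∪ σ₂⁻¹(C_U)) < 2·m(C_U), where m is the Haar probability measure on 𝕋². -/
open MeasureTheory

/-- The set `C_U = π({(x,y) : |x| ≤ ε or |y| ≤ ε})`. -/
noncomputable def CU (ε : ℝ) : Set Torus :=
  torusProj '' {p : ℝ × ℝ | |p.1| ≤ ε ∨ |p.2| ≤ ε}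

/-- The set `C_D = C_U ∪ π({(x,y) : |x+y| ≤ ε})`. -/
noncomputable def CD (ε : ℝ) : Set Torus :=
  CU ε ∪ torusProj '' {p : ℝ × ℝ | |p.1 + p.2| ≤ ε}

/-!
Let `B` be the closed `ε`-ball about `0` in `ℝ/ℤ`. Then `C_U = B × ℝ/ℤ ∪ ℝ/ℤ × B` is the disjoint
union of `B × ℝ/ℤ` and `Bᶜ × B`; put `b = m(B) > 0` and `a = m(Bᶜ × B) = (1 - b) b < b`.
Since `B = -B`, each of the four images of `C_U` lies in `C_U` together with one of the strips
`{x ∉ B, x + y ∈ B}` and `{x ∉ B, y - x ∈ B}`, the preimages of `Bᶜ × B` under the shears `σ₂` and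
`σ₂⁻¹`, which preserve `m`. Hence the union has measure at most `b + 3a < 2(b + a) = 2 m(C_U)`.
-/

open Set Metric

theorem AddCircle.image_coe_closedBall_zero (p ε : ℝ) :
    ((↑) : ℝ → AddCircle p) '' closedBall 0 ε = closedBall 0 ε := by
  ext y
  simp only [mem_image, mem_closedBall_zero_iff, Real.norm_eq_abs]
  constructor
  · rintro ⟨x, hx, rfl⟩
    exact (QuotientAddGroup.norm_mk_le_norm).trans hx
  · intro hy
    obtain ⟨x, rfl⟩ := QuotientAddGroup.mk_surjective y
    refine ⟨x - round (p⁻¹ * x) * p, ?_, ?_⟩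
    · rwa [← AddCircle.norm_eq]
    · rw [AddCircle.coe_sub, ← zsmul_eq_mul, AddCircle.coe_zsmul, AddCircle.coe_period, smul_zero,
        sub_zero]

def cross {α : Type*} (s : Set α) : Set (α × α) := s ×ˢ univ ∪ univ ×ˢ s

theorem CU_eq_cross (ε : ℝ) : CU ε = cross (closedBall 0 ε) := by
  have hbase : {p : ℝ × ℝ | |p.1| ≤ ε ∨ |p.2| ≤ ε} = cross (closedBall 0 ε) := by
    ext p
    simp [cross, abs_le]
  have himage (s t : Set ℝ) : torusProj '' s ×ˢ t = ((↑) '' s) ×ˢ ((↑) '' t) :=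
    prod_image_image_eq.symm
  rw [CU, hbase, cross, image_union, himage, himage, AddCircle.image_coe_closedBall_zero,
    image_univ_of_surjective QuotientAddGroup.mk_surjective, cross]

theorem MeasureTheory.Measure.prod_cross {α : Type*} [MeasurableSpace α] (μ : Measure α)
    [IsProbabilityMeasure μ] {s : Set α} (hs : MeasurableSet s) :
    μ.prod μ (cross s) = μ s + μ sᶜ * μ s := by
  have hdisj : cross s = s ×ˢ univ ∪ sᶜ ×ˢ s := by
    ext p
    simp only [cross, mem_union, mem_prod, mem_univ, mem_compl_iff]
    tauto
  rw [hdisj, measure_union (disjoint_compl_right.set_prod_left _ _) (hs.compl.prod hs),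
    Measure.prod_prod, Measure.prod_prod, measure_univ, mul_one]

theorem measurePreserving_sigma2 : MeasurePreserving sigma2 volume volume := by
  rw [Measure.volume_eq_prod]
  exact (MeasurePreserving.id volume).skew_product (measurable_fst.add measurable_snd)
    (Filter.Eventually.of_forall fun a => map_add_left_eq_self volume a)

theorem measurePreserving_sigma2inv : MeasurePreserving sigma2inv volume volume := by
  rw [Measure.volume_eq_prod]
  exact (MeasurePreserving.id volume).skew_product (measurable_snd.sub measurable_fst)
    (Filter.Eventually.of_forall fun a => (measurePreserving_sub_right volume a).map_eq)

theorem cross_union_images_subset {s : Set (AddCircle (1 : ℝ))} (hs : -s = s) :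
    cross s ∪ sigma1 '' cross s ∪ sigma2 '' cross s ∪ sigma1inv '' cross s ∪ sigma2inv '' cross s
      ⊆ cross s ∪ sigma2 ⁻¹' (sᶜ ×ˢ s) ∪ sigma2inv ⁻¹' (sᶜ ×ˢ s) := by
  have hneg (x) : -x ∈ s ↔ x ∈ s := by rw [← mem_neg, hs]
  rintro _ ((((hp | ⟨p, hp, rfl⟩) | ⟨p, hp, rfl⟩) | ⟨p, hp, rfl⟩) | ⟨p, hp, rfl⟩) <;>
  simp only [cross, sigma1, sigma2, sigma1inv, sigma2inv, mem_union, mem_prod, mem_univ,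
    mem_preimage, mem_compl_iff, and_true, true_and, add_sub_cancel_left, add_sub_cancel,
    sub_add_cancel, sub_add_cancel_right, hneg] at hp ⊢ <;>
  tauto

instance inst_s2 : IsProbabilityMeasure (volume : Measure (AddCircle (1 : ℝ))) :=
  ⟨UnitAddCircle.measure_univ⟩

theorem volume_cross_union_images_lt {s : Set (AddCircle (1 : ℝ))} (hs : MeasurableSet s)
    (hneg : -s = s) (hpos : volume s ≠ 0) :
    volume (cross s ∪ sigma1 '' cross s ∪ sigma2 '' cross s ∪ sigma1inv '' cross s
      ∪ sigma2inv '' cross s) < 2 * volume (cross s) := by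
  set b := volume s
  set a := volume sᶜ * b
  have hstrip : volume (sᶜ ×ˢ s : Set Torus) = a := by
    rw [Measure.volume_eq_prod, Measure.prod_prod]
  have hcross : volume (cross s) = b + a := by
    rw [Measure.volume_eq_prod, Measure.prod_cross _ hs]
  have hab : a < b := by
    have : volume sᶜ < 1 := by
      rw [prob_compl_eq_one_sub hs]
      exact ENNReal.sub_lt_self ENNReal.one_ne_top one_ne_zero hpos
    calc a = b * volume sᶜ := mul_comm _ _
      _ < b * 1 := ENNReal.mul_lt_mul_right hpos (measure_ne_top _ _) this
      _ = b := mul_one b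
  have hstrip_meas : NullMeasurableSet (sᶜ ×ˢ s : Set Torus) :=
    (hs.compl.prod hs).nullMeasurableSet
  calc _ ≤ volume (cross s ∪ sigma2 ⁻¹' (sᶜ ×ˢ s) ∪ sigma2inv ⁻¹' (sᶜ ×ˢ s)) :=
        measure_mono (cross_union_images_subset hneg)
    _ ≤ (b + a) + a + a := by
        grw [measure_union_le, measure_union_le, hcross,
          measurePreserving_sigma2.measure_preimage hstrip_meas,
          measurePreserving_sigma2inv.measure_preimage hstrip_meas, hstrip]
    _ < (b + a) + (b + a) := by
        rw [add_assoc]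
        exact ENNReal.add_lt_add_left (by finiteness) (ENNReal.add_lt_add_right (by finiteness) hab)
    _ = 2 * volume (cross s) := by rw [hcross, two_mul]

theorem CU_bad_expansion_general (ε : ℝ) (hε : 0 < ε) :
    volume (CU ε ∪ sigma1 '' CU ε ∪ sigma2 '' CU ε ∪ sigma1inv '' CU ε ∪ sigma2inv '' CU ε)
      < 2 * volume (CU ε) := by
  rw [CU_eq_cross]
  exact volume_cross_union_images_lt measurableSet_closedBall (by simp)
    (measure_closedBall_pos _ _ hε).ne'

/-- `C_U` together with its images under `σ₁, σ₂, σ₁⁻¹, σ₂⁻¹` has measure less than `2·m(C_U)`. -/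
theorem CU_bad_expansion (ε : ℝ) (hε : 0 < ε) (hε' : ε < 1 / 10) :
    volume (CU ε ∪ sigma1 '' CU ε ∪ sigma2 '' CU ε ∪ sigma1inv '' CU ε ∪ sigma2inv '' CU ε)
      < 2 * volume (CU ε) :=
  CU_bad_expansion_general ε hε
end

section
/- For every ε with 0 < ε < 1/10, the set C_D = C_U ∪ π({(x,y) ∈ ℝ² : |x+y| ≤ ε}) satisfies m(C_D ∪ σ₁(C_D) ∪ σ₂(C_D)) < (4/3)·m(C_D), where m is the Haar probability measure on 𝕋². -/
open MeasureTheory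

/-!
`C_D` is the union of the strips `X = {‖x‖ ≤ ε}`, `Y = {‖y‖ ≤ ε}`, `P = {‖x + y‖ ≤ ε}`,
and both `σ₁` and `σ₂` map it into `C_D ∪ M`, where `M = {‖y - x‖ ≤ ε}` is the diagonal
strip. Every strip has measure `2ε`, and any two of them meet in measure `4ε²`, since the pair
of defining forms is a measure-preserving shear of the torus. Bonferroni gives
`m(C_D) ≥ 6ε - 12ε²`, while `m(M \ C_D) ≤ m(M \ X) - m((M ∩ Y) \ X) ≤ (2ε - 4ε²) - ε²/16`,
a small box inside `(M ∩ Y) \ X` supplying the last term. Hence `3 m(M \ C_D) < m(C_D)`.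
-/

open Set Metric

theorem measureReal_add_add_le_union_add_inter {α : Type*} [MeasurableSpace α] (μ : Measure α)
    [IsFiniteMeasure μ] (s : Set α) {t u : Set α} (ht : MeasurableSet t) (hu : MeasurableSet u) :
    μ.real s + μ.real t + μ.real u ≤
      μ.real (s ∪ t ∪ u) + μ.real (s ∩ t) + μ.real (s ∩ u) + μ.real (t ∩ u) := by
  have hst := measureReal_union_add_inter (μ := μ) (s := s) ht
  have hstu := measureReal_union_add_inter (μ := μ) (s := s ∪ t) hu
  have hinter : μ.real ((s ∪ t) ∩ u) ≤ μ.real (s ∩ u) + μ.real (t ∩ u) := by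
    rw [union_inter_distrib_right]
    exact measureReal_union_le _ _
  linarith

local notation "𝕊" => AddCircle (1 : ℝ)

instance : IsProbabilityMeasure (volume : Measure 𝕊) := ⟨by simp⟩

namespace AddCircle

theorem norm_coe_le_abs {p : ℝ} (x : ℝ) : ‖(x : AddCircle p)‖ ≤ |x| :=
  QuotientAddGroup.norm_mk_le_norm

theorem norm_le_iff_exists_abs_le {q : 𝕊} {ε : ℝ} :
    ‖q‖ ≤ ε ↔ ∃ x : ℝ, |x| ≤ ε ∧ (x : 𝕊) = q := by
  constructor
  · obtain ⟨x, rfl⟩ := QuotientAddGroup.mk_surjective q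
    intro hx
    refine ⟨x - round x, ?_, by simp⟩
    rwa [← UnitAddCircle.norm_eq]
  · rintro ⟨x, hx, rfl⟩
    exact (norm_coe_le_abs x).trans hx

theorem volume_real_closedBall {T : ℝ} [Fact (0 < T)] {x : AddCircle T} {ε : ℝ} (hε : 0 ≤ ε)
    (hεT : 2 * ε ≤ T) : volume.real (closedBall x ε) = 2 * ε := by
  rw [measureReal_def, volume_closedBall, min_eq_right hεT, ENNReal.toReal_ofReal (by linarith)]

end AddCircle

def strip (φ : Torus → 𝕊) (ε : ℝ) : Set Torus := φ ⁻¹' closedBall 0 ε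

section strip

variable {φ ψ : Torus → 𝕊} {ε : ℝ}

theorem mem_strip {p : Torus} : p ∈ strip φ ε ↔ ‖φ p‖ ≤ ε := mem_closedBall_zero_iff

theorem measurableSet_strip (hφ : Measurable φ) : MeasurableSet (strip φ ε) :=
  hφ measurableSet_closedBall

theorem volume_real_strip (hφ : MeasurePreserving φ) (hε : 0 ≤ ε) (hε' : ε ≤ 1 / 2) :
    volume.real (strip φ ε) = 2 * ε := by
  rw [measureReal_def, strip, hφ.measure_preimage measurableSet_closedBall.nullMeasurableSet,
    ← measureReal_def, AddCircle.volume_real_closedBall hε (by linarith)]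

theorem volume_real_strip_inter_strip (h : MeasurePreserving fun p => (φ p, ψ p))
    (hε : 0 ≤ ε) (hε' : ε ≤ 1 / 2) :
    volume.real (strip φ ε ∩ strip ψ ε) = (2 * ε) ^ 2 := by
  have hball := measurableSet_closedBall (x := (0 : 𝕊)) (ε := ε)
  rw [measureReal_def, strip, strip, ← mk_preimage_prod,
    h.measure_preimage (hball.prod hball).nullMeasurableSet, Measure.volume_eq_prod,
    Measure.prod_prod, ENNReal.toReal_mul, ← measureReal_def,
    AddCircle.volume_real_closedBall hε (by linarith), sq]

end strip

theorem measurePreserving_fst_add_snd : MeasurePreserving (Prod.fst + Prod.snd : Torus → 𝕊) :=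
  measurePreserving_snd.comp (measurePreserving_prod_add volume volume)

theorem measurePreserving_snd_sub_fst : MeasurePreserving (Prod.snd - Prod.fst : Torus → 𝕊) :=
  measurePreserving_snd.comp (measurePreserving_prod_sub volume volume)

local notation "X" => strip Prod.fst
local notation "Y" => strip Prod.snd
local notation "P" => strip (Prod.fst + Prod.snd)
local notation "M" => strip (Prod.snd - Prod.fst)

theorem torusProj_image_eq_strip {f : ℝ × ℝ → ℝ} {φ : Torus → 𝕊} (ε : ℝ)
    (hφ : ∀ p, φ (torusProj p) = f p)
    (hlift : ∀ q (x : ℝ), (x : 𝕊) = φ q → ∃ p, torusProj p = q ∧ f p = x) :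
    torusProj '' {p | |f p| ≤ ε} = strip φ ε := by
  ext q
  rw [mem_strip, AddCircle.norm_le_iff_exists_abs_le]
  constructor
  · rintro ⟨p, hp, rfl⟩
    exact ⟨f p, hp, (hφ p).symm⟩
  · rintro ⟨x, hx, hxq⟩
    obtain ⟨p, rfl, rfl⟩ := hlift q x hxq
    exact ⟨p, hx, rfl⟩

theorem CD_eq_union_strip (ε : ℝ) : CD ε = X ε ∪ Y ε ∪ P ε := by
  have hX := torusProj_image_eq_strip (f := Prod.fst) (φ := Prod.fst) ε (fun _ => rfl)
    fun q x hx => by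
      obtain ⟨y, hy⟩ := QuotientAddGroup.mk_surjective q.2
      exact ⟨(x, y), Prod.ext hx hy, rfl⟩
  have hY := torusProj_image_eq_strip (f := Prod.snd) (φ := Prod.snd) ε (fun _ => rfl)
    fun q y hy => by
      obtain ⟨x, hx⟩ := QuotientAddGroup.mk_surjective q.1
      exact ⟨(x, y), Prod.ext hx hy, rfl⟩
  have hP := torusProj_image_eq_strip (f := fun p => p.1 + p.2) (φ := Prod.fst + Prod.snd) ε
    (fun p => (AddCircle.coe_add 1 p.1 p.2).symm)
    fun q t ht => by
      obtain ⟨x, hx⟩ := QuotientAddGroup.mk_surjective q.1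
      refine ⟨(x, t - x), Prod.ext hx ?_, add_sub_cancel _ _⟩
      change ((t - x : ℝ) : 𝕊) = q.2
      rw [AddCircle.coe_sub, ht, hx]
      exact add_sub_cancel_left _ _
  rw [CD, CU, ofPred_or, image_union, hX, hY, hP]

theorem CD_union_image_sigma_subset (ε : ℝ) :
    CD ε ∪ sigma1 '' CD ε ∪ sigma2 '' CD ε ⊆ CD ε ∪ M ε := by
  refine union_subset (union_subset subset_union_left ?_) ?_ <;>
  · rw [CD_eq_union_strip, image_subset_iff]
    intro p hp
    simp only [mem_union, mem_preimage, mem_strip, sigma1, sigma2, Pi.add_apply, Pi.sub_apply,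
      sub_add_cancel_right, add_sub_cancel_left, norm_neg] at hp ⊢
    tauto

theorem le_volume_real_CD {ε : ℝ} (hε : 0 ≤ ε) (hε' : ε ≤ 1 / 2) :
    6 * ε - 12 * ε ^ 2 ≤ volume.real (CD ε) := by
  have hX : volume.real (X ε) = 2 * ε :=
    volume_real_strip (measurePreserving_fst (ν := volume)) hε hε'
  have hY : volume.real (Y ε) = 2 * ε :=
    volume_real_strip (measurePreserving_snd (μ := volume)) hε hε'
  have hP : volume.real (P ε) = 2 * ε := volume_real_strip measurePreserving_fst_add_snd hε hε'
  have hXY : volume.real (X ε ∩ Y ε) = (2 * ε) ^ 2 :=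
    volume_real_strip_inter_strip (MeasurePreserving.id volume) hε hε'
  have hXP : volume.real (X ε ∩ P ε) = (2 * ε) ^ 2 :=
    volume_real_strip_inter_strip (measurePreserving_prod_add volume volume) hε hε'
  have hYP : volume.real (Y ε ∩ P ε) = (2 * ε) ^ 2 :=
    volume_real_strip_inter_strip (measurePreserving_prod_add_swap_right volume volume) hε hε'
  have hbonferroni := measureReal_add_add_le_union_add_inter volume (X ε) (t := Y ε)
    (u := P ε) (measurableSet_strip measurable_snd)
    (measurableSet_strip measurePreserving_fst_add_snd.measurable)
  rw [CD_eq_union_strip]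
  linarith

theorem le_volume_real_diag_strip_inter_strip_diff {ε : ℝ} (hε : 0 < ε) (hε' : ε ≤ 2 / 5) :
    ε ^ 2 / 16 ≤ volume.real ((M ε ∩ Y ε) \ X ε) := by
  set c₁ : 𝕊 := ((5 * ε / 4 : ℝ) : 𝕊)
  set c₂ : 𝕊 := ((3 * ε / 4 : ℝ) : 𝕊)
  have hc₁ : ‖c₁‖ = 5 * ε / 4 := by
    have h := (AddCircle.norm_coe_eq_abs_iff (p := 1) (x := 5 * ε / 4) one_ne_zero).2
      (by rw [abs_one, abs_of_pos (by positivity)]; linarith)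
    rwa [abs_of_pos (by positivity)] at h
  have hc₂ : ‖c₂‖ ≤ 3 * ε / 4 :=
    (AddCircle.norm_coe_le_abs _).trans (abs_of_pos (by positivity)).le
  have hc : ‖c₂ - c₁‖ ≤ ε / 2 := by
    rw [← AddCircle.coe_sub]
    refine (AddCircle.norm_coe_le_abs _).trans ?_
    rw [abs_le]
    constructor <;> linarith
  have hsub : closedBall c₁ (ε / 8) ×ˢ closedBall c₂ (ε / 8) ⊆ (M ε ∩ Y ε) \ X ε := by
    rintro ⟨u, v⟩ ⟨hu, hv⟩
    rw [mem_closedBall, dist_eq_norm] at hu hv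
    dsimp only at hu hv
    refine ⟨⟨?_, ?_⟩, ?_⟩ <;> simp only [mem_strip, Pi.sub_apply, not_le]
    · calc ‖v - u‖ = ‖(v - c₂) - (u - c₁) + (c₂ - c₁)‖ := by abel_nf
        _ ≤ ε := by
          linarith [norm_add_le ((v - c₂) - (u - c₁)) (c₂ - c₁), norm_sub_le (v - c₂) (u - c₁)]
    · calc ‖v‖ = ‖(v - c₂) + c₂‖ := by rw [sub_add_cancel]
        _ ≤ ε := by linarith [norm_add_le (v - c₂) c₂]
    · linarith [norm_sub_norm_le c₁ u, norm_sub_rev u c₁]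
  calc ε ^ 2 / 16 = volume.real (closedBall c₁ (ε / 8) ×ˢ closedBall c₂ (ε / 8)) := by
        rw [measureReal_def, Measure.volume_eq_prod, Measure.prod_prod, ENNReal.toReal_mul,
          ← measureReal_def, ← measureReal_def,
          AddCircle.volume_real_closedBall (by positivity) (by linarith),
          AddCircle.volume_real_closedBall (by positivity) (by linarith)]
        ring
    _ ≤ volume.real ((M ε ∩ Y ε) \ X ε) := measureReal_mono hsub

theorem volume_real_diag_strip_diff_CD_le {ε : ℝ} (hε : 0 < ε) (hε' : ε ≤ 2 / 5) :
    volume.real (M ε \ CD ε) ≤ 2 * ε - 4 * ε ^ 2 - ε ^ 2 / 16 := by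
  have hM : volume.real (M ε) = 2 * ε :=
    volume_real_strip measurePreserving_snd_sub_fst hε.le (by linarith)
  have hMX : volume.real (M ε ∩ X ε) = (2 * ε) ^ 2 := by
    rw [inter_comm]
    exact volume_real_strip_inter_strip (measurePreserving_prod_sub volume volume) hε.le
      (by linarith)
  have hM_X := measureReal_sdiff_add_inter (μ := volume) (s := M ε)
    (measurableSet_strip (ε := ε) measurable_fst)
  have hM_X_Y := measureReal_sdiff_add_inter (μ := volume) (s := M ε \ X ε)
    (measurableSet_strip (ε := ε) measurable_snd)
  rw [sdiff_inter_right_comm] at hM_X_Y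
  calc volume.real (M ε \ CD ε) ≤ volume.real ((M ε \ X ε) \ Y ε) := by
        rw [CD_eq_union_strip, sdiff_sdiff]
        exact measureReal_mono (sdiff_subset_sdiff_right subset_union_left)
    _ ≤ 2 * ε - 4 * ε ^ 2 - ε ^ 2 / 16 := by
        linarith [le_volume_real_diag_strip_inter_strip_diff hε hε']

/-- `C_D` together with its images under `σ₁, σ₂` has measure less than `(4/3)·m(C_D)`. -/
theorem CD_bad_expansion (ε : ℝ) (hε : 0 < ε) (hε' : ε < 1 / 10) :
    volume (CD ε ∪ sigma1 '' CD ε ∪ sigma2 '' CD ε) < (4 / 3 : ENNReal) * volume (CD ε) := by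
  have hCD := le_volume_real_CD hε.le (by linarith)
  have hnew := volume_real_diag_strip_diff_CD_le hε (by linarith)
  have hreal :
      volume.real (CD ε ∪ sigma1 '' CD ε ∪ sigma2 '' CD ε) < 4 / 3 * volume.real (CD ε) :=
    calc _ ≤ volume.real (CD ε ∪ M ε \ CD ε) := by
          rw [union_sdiff_self]
          exact measureReal_mono (CD_union_image_sigma_subset ε)
      _ ≤ volume.real (CD ε) + volume.real (M ε \ CD ε) := measureReal_union_le _ _
      _ < 4 / 3 * volume.real (CD ε) := by linarith [pow_pos hε 2]
  rw [← ofReal_measureReal, ← ofReal_measureReal (s := CD ε),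
    show (4 / 3 : ENNReal) = ENNReal.ofReal (4 / 3) by
      rw [ENNReal.ofReal_div_of_pos three_pos]; norm_num,
    ← ENNReal.ofReal_mul (by norm_num)]
  exact (ENNReal.ofReal_lt_ofReal_iff_of_nonneg measureReal_nonneg).2 hreal
end

section
/- For every ε with 0 < ε < 1/10, the set C_D = C_U ∪ π({(x,y) ∈ ℝ² : |x+y| ≤ ε}) satisfies m(C_D ∪ σ₁(C_D) ∪ σ₂(C_D)) = 8ε − 16ε², where m is the Haar probability measure on 𝕋². -/
open MeasureTheory

/-!
In terms of the norm of `AddCircle 1`, `C_D = {‖x‖ ≤ ε} ∪ {‖y‖ ≤ ε} ∪ {‖x + y‖ ≤ ε}`. The images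
under `σ₁, σ₂` are the preimages under `σ₁⁻¹, σ₂⁻¹`, and they only add the fourth strip
`{‖x - y‖ ≤ ε}`. Lifted to the fundamental square `(0,1]²`, the complement of the four strips
consists of four triangles (cut out by `x`, `y`, `x + y - 1`, `x - y` being `ε`-far from
the integers), each of area `(1 - 4ε)² / 4`, so the strips have measure `1 - (1 - 4ε)²`.
-/

open Set

namespace UnitAddCircle

theorem norm_coe_le_iff {x ε : ℝ} : ‖(x : UnitAddCircle)‖ ≤ ε ↔ ∃ n : ℤ, |x - n| ≤ ε := by
  simpa [dist_eq_norm] using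
    congrArg (x ∈ ·) (AddCircle.coe_real_preimage_closedBall_eq_iUnion (p := 1) 0 ε)

theorem norm_coe_le_abs (x : ℝ) : ‖(x : UnitAddCircle)‖ ≤ |x| :=
  norm_coe_le_iff.2 ⟨0, by simp⟩

theorem norm_le_iff_exists_coe {q : UnitAddCircle} {ε : ℝ} :
    ‖q‖ ≤ ε ↔ ∃ x : ℝ, (x : UnitAddCircle) = q ∧ |x| ≤ ε := by
  induction q using QuotientAddGroup.induction_on with | H y => ?_
  refine ⟨fun h => ?_, fun ⟨x, hx, hxε⟩ => hx ▸ (norm_coe_le_abs x).trans hxε⟩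
  obtain ⟨n, hn⟩ := norm_coe_le_iff.1 h
  exact ⟨y - n, by simp, hn⟩

end UnitAddCircle

open UnitAddCircle

theorem CD_eq_setOf_norm_le (ε : ℝ) :
    CD ε = {q : Torus | ‖q.1‖ ≤ ε ∨ ‖q.2‖ ≤ ε ∨ ‖q.1 + q.2‖ ≤ ε} := by
  apply Subset.antisymm
  · rintro _ (⟨p, hp | hp, rfl⟩ | ⟨p, hp, rfl⟩)
    · exact Or.inl ((norm_coe_le_abs _).trans hp)
    · exact Or.inr (Or.inl ((norm_coe_le_abs _).trans hp))
    · exact Or.inr (Or.inr ((norm_coe_le_abs (p.1 + p.2)).trans hp))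
  · rintro ⟨a, b⟩ (h | h | h)
    · obtain ⟨x, rfl, hx⟩ := norm_le_iff_exists_coe.1 h
      obtain ⟨y, rfl⟩ := QuotientAddGroup.mk_surjective b
      exact Or.inl ⟨(x, y), Or.inl hx, rfl⟩
    · obtain ⟨x, rfl⟩ := QuotientAddGroup.mk_surjective a
      obtain ⟨y, rfl, hy⟩ := norm_le_iff_exists_coe.1 h
      exact Or.inl ⟨(x, y), Or.inr hy, rfl⟩
    · obtain ⟨s, hs, hsε⟩ := norm_le_iff_exists_coe.1 h
      obtain ⟨y, rfl⟩ := QuotientAddGroup.mk_surjective b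
      refine Or.inr ⟨(s - y, y), by simpa using hsε, ?_⟩
      simp [torusProj, hs]

theorem image_sigma1_eq_preimage (s : Set Torus) : sigma1 '' s = sigma1inv ⁻¹' s :=
  congrFun (image_eq_preimage_of_inverse (g := sigma1inv) (fun _ => by simp [sigma1, sigma1inv])
    (fun _ => by simp [sigma1, sigma1inv])) s

theorem image_sigma2_eq_preimage (s : Set Torus) : sigma2 '' s = sigma2inv ⁻¹' s :=
  congrFun (image_eq_preimage_of_inverse (g := sigma2inv) (fun _ => by simp [sigma2, sigma2inv])
    (fun _ => by simp [sigma2, sigma2inv])) s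

def fourStrips (ε : ℝ) : Set Torus :=
  {q | ‖q.1‖ ≤ ε ∨ ‖q.2‖ ≤ ε ∨ ‖q.1 + q.2‖ ≤ ε ∨ ‖q.1 - q.2‖ ≤ ε}

theorem CD_union_images_eq_fourStrips (ε : ℝ) :
    CD ε ∪ sigma1 '' CD ε ∪ sigma2 '' CD ε = fourStrips ε := by
  ext q
  simp only [image_sigma1_eq_preimage, image_sigma2_eq_preimage, CD_eq_setOf_norm_le, fourStrips,
    mem_union, mem_preimage, mem_ofPred_eq, sigma1inv, sigma2inv, sub_add_cancel, add_sub_cancel,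
    norm_sub_rev q.2 q.1]
  tauto

theorem measurableSet_fourStrips (ε : ℝ) : MeasurableSet (fourStrips ε) := by
  unfold fourStrips
  measurability

theorem measurePreserving_torusProj :
    MeasurePreserving torusProj (volume.restrict (Ioc (0 : ℝ) 1 ×ˢ Ioc (0 : ℝ) 1)) volume := by
  have h := AddCircle.measurePreserving_mk (1 : ℝ) 0
  rw [zero_add] at h
  rw [Measure.volume_eq_prod, ← Measure.prod_restrict, Measure.volume_eq_prod]
  exact h.prod h

theorem lt_abs_sub_intCast_of_lt_abs_sub {t ε : ℝ} {k : ℤ} (hk : ε < |t - k|)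
    (hk' : |t - k| < 1 - ε) (n : ℤ) : ε < |t - n| := by
  rcases eq_or_ne n k with rfl | hnk
  · exact hk
  have h1 : (1 : ℝ) ≤ |(n : ℝ) - k| := by exact_mod_cast Int.one_le_abs (sub_ne_zero.2 hnk)
  have h2 := abs_sub_le (n : ℝ) t k
  rw [abs_sub_comm (n : ℝ) t] at h2
  linarith

theorem mem_square_diff_preimage_fourStrips {ε : ℝ} (hε : 0 ≤ ε) (x y : ℝ) :
    (x, y) ∈ (Ioc (0 : ℝ) 1 ×ˢ Ioc (0 : ℝ) 1) \ torusProj ⁻¹' fourStrips ε ↔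
      ε < x ∧ x < 1 - ε ∧ ε < y ∧ y < 1 - ε ∧ ε < |x + y - 1| ∧ ε < |x - y| := by
  simp only [mem_sdiff, mem_prod, mem_Ioc, mem_preimage, fourStrips, mem_ofPred_eq, torusProj,
    ← AddCircle.coe_add, ← AddCircle.coe_sub, norm_coe_le_iff]
  push Not
  constructor
  · rintro ⟨⟨⟨hx0, hx1⟩, hy0, hy1⟩, hx, hy, hs, hd⟩
    have hx₀ := hx 0
    have hx₁ := hx 1
    have hy₀ := hy 0
    have hy₁ := hy 1
    simp only [Int.cast_zero, Int.cast_one, sub_zero, abs_of_pos hx0, abs_of_pos hy0,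
      abs_of_nonpos (sub_nonpos.2 hx1), abs_of_nonpos (sub_nonpos.2 hy1)] at hx₀ hx₁ hy₀ hy₁
    exact ⟨by linarith, by linarith, by linarith, by linarith, by simpa using hs 1,
      by simpa using hd 0⟩
  · rintro ⟨hx0, hx1, hy0, hy1, hs, hd⟩
    have hx : |x| < 1 - ε := abs_lt.2 ⟨by linarith, by linarith⟩
    have hy : |y| < 1 - ε := abs_lt.2 ⟨by linarith, by linarith⟩
    have hs' : |x + y - 1| < 1 - ε := abs_lt.2 ⟨by linarith, by linarith⟩
    have hd' : |x - y| < 1 - ε := abs_lt.2 ⟨by linarith, by linarith⟩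
    refine ⟨⟨⟨by linarith, by linarith⟩, by linarith, by linarith⟩, ?_, ?_, ?_, ?_⟩
    · exact lt_abs_sub_intCast_of_lt_abs_sub (k := 0) (by simpa using hx0.trans_le (le_abs_self x))
        (by simpa using hx)
    · exact lt_abs_sub_intCast_of_lt_abs_sub (k := 0) (by simpa using hy0.trans_le (le_abs_self y))
        (by simpa using hy)
    · exact lt_abs_sub_intCast_of_lt_abs_sub (k := 1) (by simpa using hs) (by simpa using hs')
    · exact lt_abs_sub_intCast_of_lt_abs_sub (k := 0) (by simpa using hd) (by simpa using hd')

theorem volume_regionBetween_Ioo {f g : ℝ → ℝ} (hf : Continuous f) (hg : Continuous g) {a b : ℝ}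
    (hab : a ≤ b) (hfg : ∀ x ∈ Ioo a b, f x ≤ g x) :
    volume (regionBetween f g (Ioo a b)) = ENNReal.ofReal (∫ x in a..b, g x - f x) := by
  rw [Measure.volume_eq_prod, volume_regionBetween_eq_integral
    (hf.integrableOn_Icc.mono_set Ioo_subset_Icc_self)
    (hg.integrableOn_Icc.mono_set Ioo_subset_Icc_self) measurableSet_Ioo hfg,
    ← integral_Ioc_eq_integral_Ioo, ← intervalIntegral.integral_of_le hab]
  rfl

def leftTriangle (ε : ℝ) : Set (ℝ × ℝ) :=
  regionBetween (fun x => x + ε) (fun x => 1 - x - ε) (Ioo ε (1 / 2 - ε))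

def rightTriangle (ε : ℝ) : Set (ℝ × ℝ) :=
  regionBetween (fun x => 1 - x + ε) (fun x => x - ε) (Ioo (1 / 2 + ε) (1 - ε))

theorem square_diff_preimage_fourStrips {ε : ℝ} (hε : 0 ≤ ε) :
    (Ioc (0 : ℝ) 1 ×ˢ Ioc (0 : ℝ) 1) \ torusProj ⁻¹' fourStrips ε =
      leftTriangle ε ∪ rightTriangle ε ∪ Prod.swap ⁻¹' leftTriangle ε ∪
        Prod.swap ⁻¹' rightTriangle ε := by
  ext ⟨x, y⟩
  simp only [mem_square_diff_preimage_fourStrips hε, lt_abs, leftTriangle, rightTriangle,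
    regionBetween, mem_union, mem_preimage, Prod.swap_prod_mk, mem_ofPred_eq, mem_Ioo]
  constructor
  · rintro ⟨hx0, hx1, hy0, hy1, hs | hs, hd | hd⟩
    · exact Or.inl (Or.inl (Or.inr ⟨⟨by linarith, by linarith⟩, by linarith, by linarith⟩))
    · exact Or.inr ⟨⟨by linarith, by linarith⟩, by linarith, by linarith⟩
    · exact Or.inl (Or.inr ⟨⟨by linarith, by linarith⟩, by linarith, by linarith⟩)
    · exact Or.inl (Or.inl (Or.inl ⟨⟨by linarith, by linarith⟩, by linarith, by linarith⟩))
  · rintro (((⟨⟨h1, h2⟩, h3, h4⟩ | ⟨⟨h1, h2⟩, h3, h4⟩) | ⟨⟨h1, h2⟩, h3, h4⟩) |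
      ⟨⟨h1, h2⟩, h3, h4⟩)
    · exact ⟨by linarith, by linarith, by linarith, by linarith, .inr (by linarith),
        .inr (by linarith)⟩
    · exact ⟨by linarith, by linarith, by linarith, by linarith, .inl (by linarith),
        .inl (by linarith)⟩
    · exact ⟨by linarith, by linarith, by linarith, by linarith, .inr (by linarith),
        .inl (by linarith)⟩
    · exact ⟨by linarith, by linarith, by linarith, by linarith, .inl (by linarith),
        .inr (by linarith)⟩

theorem integral_const_add_mul (a b c d : ℝ) :
    ∫ x in a..b, (c + d * x) = c * (b - a) + d * (b ^ 2 - a ^ 2) / 2 := by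
  rw [intervalIntegral.integral_add intervalIntegrable_const
    (intervalIntegral.intervalIntegrable_id.const_mul d), intervalIntegral.integral_const,
    intervalIntegral.integral_const_mul, integral_id, smul_eq_mul]
  ring

theorem volume_leftTriangle {ε : ℝ} (hε : ε ≤ 1 / 4) :
    volume (leftTriangle ε) = ENNReal.ofReal ((1 - 4 * ε) ^ 2 / 4) := by
  rw [leftTriangle, volume_regionBetween_Ioo (by fun_prop) (by fun_prop) (by linarith)
    (fun x hx => by linarith [hx.2])]
  have (x : ℝ) : 1 - x - ε - (x + ε) = (1 - 2 * ε) + (-2) * x := by ring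
  simp only [this, integral_const_add_mul]
  ring_nf

theorem volume_rightTriangle {ε : ℝ} (hε : ε ≤ 1 / 4) :
    volume (rightTriangle ε) = ENNReal.ofReal ((1 - 4 * ε) ^ 2 / 4) := by
  rw [rightTriangle, volume_regionBetween_Ioo (by fun_prop) (by fun_prop) (by linarith)
    (fun x hx => by linarith [hx.1])]
  have (x : ℝ) : x - ε - (1 - x + ε) = -(1 + 2 * ε) + 2 * x := by ring
  simp only [this, integral_const_add_mul]
  ring_nf

theorem volume_preimage_swap {s : Set (ℝ × ℝ)} (hs : MeasurableSet s) :
    volume (Prod.swap ⁻¹' s) = volume s :=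
  Measure.measurePreserving_swap.measure_preimage hs.nullMeasurableSet

theorem volume_square_diff_preimage_fourStrips {ε : ℝ} (hε : 0 ≤ ε) (hε' : ε ≤ 1 / 4) :
    volume ((Ioc (0 : ℝ) 1 ×ˢ Ioc (0 : ℝ) 1) \ torusProj ⁻¹' fourStrips ε) =
      ENNReal.ofReal ((1 - 4 * ε) ^ 2) := by
  have hL : MeasurableSet (leftTriangle ε) :=
    measurableSet_regionBetween (by fun_prop) (by fun_prop) measurableSet_Ioo
  have hR : MeasurableSet (rightTriangle ε) :=
    measurableSet_regionBetween (by fun_prop) (by fun_prop) measurableSet_Ioo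
  have hd₁ : Disjoint (leftTriangle ε) (rightTriangle ε) := by
    rw [Set.disjoint_left]
    rintro ⟨x, y⟩ ⟨⟨a1, a2⟩, a3, a4⟩ ⟨⟨b1, b2⟩, b3, b4⟩
    linarith
  have hd₂ : Disjoint (leftTriangle ε ∪ rightTriangle ε) (Prod.swap ⁻¹' leftTriangle ε) := by
    rw [Set.disjoint_left]
    rintro ⟨x, y⟩ (⟨⟨a1, a2⟩, a3, a4⟩ | ⟨⟨a1, a2⟩, a3, a4⟩) ⟨⟨b1, b2⟩, b3, b4⟩ <;>
      simp only [Prod.swap_prod_mk] at * <;> linarith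
  have hd₃ : Disjoint (leftTriangle ε ∪ rightTriangle ε ∪ Prod.swap ⁻¹' leftTriangle ε)
      (Prod.swap ⁻¹' rightTriangle ε) := by
    rw [Set.disjoint_left]
    rintro ⟨x, y⟩ ((⟨⟨a1, a2⟩, a3, a4⟩ | ⟨⟨a1, a2⟩, a3, a4⟩) | ⟨⟨a1, a2⟩, a3, a4⟩)
      ⟨⟨b1, b2⟩, b3, b4⟩ <;> simp only [Prod.swap_prod_mk] at * <;> linarith
  rw [square_diff_preimage_fourStrips hε, measure_union hd₃ (hR.preimage measurable_swap),
    measure_union hd₂ (hL.preimage measurable_swap), measure_union hd₁ hR,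
    volume_preimage_swap hL, volume_preimage_swap hR, volume_leftTriangle hε',
    volume_rightTriangle hε', ← ENNReal.ofReal_add, ← ENNReal.ofReal_add, ← ENNReal.ofReal_add]
  · ring_nf
  all_goals positivity

theorem volume_fourStrips {ε : ℝ} (hε : 0 ≤ ε) (hε' : ε ≤ 1 / 4) :
    volume (fourStrips ε) = ENNReal.ofReal (8 * ε - 16 * ε ^ 2) := by
  set square := Ioc (0 : ℝ) 1 ×ˢ Ioc (0 : ℝ) 1
  have h_meas_square : MeasurableSet square := measurableSet_Ioc.prod measurableSet_Ioc
  have hV := measurableSet_fourStrips ε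
  have hS : MeasurableSet (torusProj ⁻¹' fourStrips ε) :=
    hV.preimage measurePreserving_torusProj.measurable
  have h_square : volume square = 1 := by
    rw [Measure.volume_eq_prod, Measure.prod_prod, Real.volume_Ioc]
    norm_num
  have h_gap := volume_square_diff_preimage_fourStrips hε hε'
  rw [← measurePreserving_torusProj.measure_preimage hV.nullMeasurableSet,
    Measure.restrict_apply hS, inter_comm, ← sdiff_sdiff_right_self,
    measure_sdiff sdiff_subset (h_meas_square.diff hS).nullMeasurableSet
      (h_gap ▸ ENNReal.ofReal_ne_top),
    h_gap, h_square, ← ENNReal.ofReal_one, ← ENNReal.ofReal_sub _ (sq_nonneg _)]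
  ring_nf

/-- The measure of `C_D` together with its images under `σ₁, σ₂` equals `8ε - 16ε²`. -/
theorem volume_CD_union_images (ε : ℝ) (hε : 0 < ε) (hε' : ε < 1 / 10) :
    volume (CD ε ∪ sigma1 '' CD ε ∪ sigma2 '' CD ε)
      = ENNReal.ofReal (8 * ε - 16 * ε ^ 2) := by
  rw [CD_union_images_eq_fourStrips]
  exact volume_fourStrips hε.le (by linarith)
end

section
/- Let p be an odd prime and let S = {(x,0) : x ∈ ℤ/pℤ, x ≠ 0} ∪ {(0,y) : y ∈ ℤ/pℤ, y ≠ 0} ⊆ (ℤ/pℤ)². Then the cardinality of S ∪ σ₁(S) ∪ σ₂(S) ∪ σ₁⁻¹(S) ∪ σ₂⁻¹(S) equals 2·|S|, where σ₁ = [[1,1],[0,1]] and σ₂ = [[1,0],[1,1]] act on (ℤ/pℤ)² by matrix-vector multiplication (so the undirected vertex-isoperimetric bound holds with equality for S). -/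
/-!
Write `S = X ∪ Y` for the two punctured axes. The shears `σ₁^{±1}` fix the punctured `x`-axis
and carry the punctured `y`-axis onto the punctured diagonal `D` resp. antidiagonal `E`, while
`σ₂^{±1}` fix `Y` and carry `X` onto `D` resp. `E`. So the union of the five sets is
`X ∪ Y ∪ D ∪ E`. These four lines through the origin are pairwise distinct because `2` is
invertible mod an odd `p`, so after removing the origin they are disjoint, and the shears (or the
swap of coordinates) put each of them in bijection with `X`.
-/

/-- Action of `σ₁ = [[1,1],[0,1]]` on `(ℤ/pℤ)²`: `(x,y) ↦ (x+y, y)`. -/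
def zsigma1 {p : ℕ} (v : ZMod p × ZMod p) : ZMod p × ZMod p := (v.1 + v.2, v.2)

/-- Action of `σ₂ = [[1,0],[1,1]]` on `(ℤ/pℤ)²`: `(x,y) ↦ (x, x+y)`. -/
def zsigma2 {p : ℕ} (v : ZMod p × ZMod p) : ZMod p × ZMod p := (v.1, v.1 + v.2)

/-- Action of `σ₁⁻¹ = [[1,-1],[0,1]]` on `(ℤ/pℤ)²`: `(x,y) ↦ (x-y, y)`. -/
def zsigma1inv {p : ℕ} (v : ZMod p × ZMod p) : ZMod p × ZMod p := (v.1 - v.2, v.2)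

/-- Action of `σ₂⁻¹ = [[1,0],[-1,1]]` on `(ℤ/pℤ)²`: `(x,y) ↦ (x, y-x)`. -/
def zsigma2inv {p : ℕ} (v : ZMod p × ZMod p) : ZMod p × ZMod p := (v.1, v.2 - v.1)

section PuncturedLines

variable (R : Type*) [Ring R]

def puncturedXAxis : Set (R × R) := {v | v.2 = 0 ∧ v.1 ≠ 0}

def puncturedYAxis : Set (R × R) := {v | v.1 = 0 ∧ v.2 ≠ 0}

def puncturedDiagonal : Set (R × R) := {v | v.1 = v.2 ∧ v.2 ≠ 0}

def puncturedAntidiagonal : Set (R × R) := {v | v.1 = -v.2 ∧ v.2 ≠ 0}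

theorem image_swap_puncturedXAxis : Prod.swap '' puncturedXAxis R = puncturedYAxis R := by
  rw [Set.image_swap_eq_preimage_swap]
  rfl

theorem ncard_puncturedYAxis : (puncturedYAxis R).ncard = (puncturedXAxis R).ncard := by
  rw [← image_swap_puncturedXAxis, Set.ncard_image_of_injective _ Prod.swap_injective]

theorem disjoint_puncturedXAxis_puncturedYAxis :
    Disjoint (puncturedXAxis R) (puncturedYAxis R) :=
  Set.disjoint_left.mpr fun _ ⟨_, hx⟩ ⟨hx', _⟩ => hx hx'

theorem disjoint_puncturedAxes_puncturedDiagonal :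
    Disjoint (puncturedXAxis R ∪ puncturedYAxis R) (puncturedDiagonal R) := by
  rw [Set.disjoint_left]
  rintro v (⟨hy, -⟩ | ⟨hx, -⟩) ⟨hxy, hy'⟩
  · exact hy' hy
  · exact hy' (hxy ▸ hx)

theorem disjoint_puncturedAntidiagonal {R : Type*} [CommRing R] (h2 : IsUnit (2 : R)) :
    Disjoint (puncturedXAxis R ∪ puncturedYAxis R ∪ puncturedDiagonal R)
      (puncturedAntidiagonal R) := by
  rw [Set.disjoint_left]
  rintro v ((⟨hy, -⟩ | ⟨hx, -⟩) | ⟨hxy, -⟩) ⟨hxy', hy'⟩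
  · exact hy' hy
  · exact hy' (neg_eq_zero.mp (hxy' ▸ hx))
  · refine hy' ((h2.mul_right_eq_zero).mp ?_)
    linear_combination hxy' - hxy

end PuncturedLines

section Shears

variable {p : ℕ}

theorem zsigma1inv_zsigma1 (v : ZMod p × ZMod p) : zsigma1inv (zsigma1 v) = v := by
  simp [zsigma1, zsigma1inv]

theorem zsigma1_zsigma1inv (v : ZMod p × ZMod p) : zsigma1 (zsigma1inv v) = v := by
  simp [zsigma1, zsigma1inv]

theorem zsigma2inv_zsigma2 (v : ZMod p × ZMod p) : zsigma2inv (zsigma2 v) = v := by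
  simp [zsigma2, zsigma2inv]

theorem zsigma2_zsigma2inv (v : ZMod p × ZMod p) : zsigma2 (zsigma2inv v) = v := by
  simp [zsigma2, zsigma2inv]

theorem image_zsigma1 (s : Set (ZMod p × ZMod p)) : zsigma1 '' s = zsigma1inv ⁻¹' s :=
  congrFun (Set.image_eq_preimage_of_inverse zsigma1inv_zsigma1 zsigma1_zsigma1inv) s

theorem image_zsigma1inv (s : Set (ZMod p × ZMod p)) : zsigma1inv '' s = zsigma1 ⁻¹' s :=
  congrFun (Set.image_eq_preimage_of_inverse zsigma1_zsigma1inv zsigma1inv_zsigma1) s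

theorem image_zsigma2 (s : Set (ZMod p × ZMod p)) : zsigma2 '' s = zsigma2inv ⁻¹' s :=
  congrFun (Set.image_eq_preimage_of_inverse zsigma2inv_zsigma2 zsigma2_zsigma2inv) s

theorem image_zsigma2inv (s : Set (ZMod p × ZMod p)) : zsigma2inv '' s = zsigma2 ⁻¹' s :=
  congrFun (Set.image_eq_preimage_of_inverse zsigma2_zsigma2inv zsigma2inv_zsigma2) s

theorem zsigma1_image_puncturedXAxis :
    zsigma1 '' puncturedXAxis (ZMod p) = puncturedXAxis (ZMod p) := by
  ext v; simp +contextual [image_zsigma1, puncturedXAxis, zsigma1inv]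

theorem zsigma1inv_image_puncturedXAxis :
    zsigma1inv '' puncturedXAxis (ZMod p) = puncturedXAxis (ZMod p) := by
  ext v; simp +contextual [image_zsigma1inv, puncturedXAxis, zsigma1]

theorem zsigma2_image_puncturedYAxis :
    zsigma2 '' puncturedYAxis (ZMod p) = puncturedYAxis (ZMod p) := by
  ext v; simp +contextual [image_zsigma2, puncturedYAxis, zsigma2inv]

theorem zsigma2inv_image_puncturedYAxis :
    zsigma2inv '' puncturedYAxis (ZMod p) = puncturedYAxis (ZMod p) := by
  ext v; simp +contextual [image_zsigma2inv, puncturedYAxis, zsigma2]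

theorem zsigma1_image_puncturedYAxis :
    zsigma1 '' puncturedYAxis (ZMod p) = puncturedDiagonal (ZMod p) := by
  ext v; simp [image_zsigma1, puncturedYAxis, puncturedDiagonal, zsigma1inv, sub_eq_zero]

theorem zsigma2_image_puncturedXAxis :
    zsigma2 '' puncturedXAxis (ZMod p) = puncturedDiagonal (ZMod p) := by
  ext v
  simp only [image_zsigma2, puncturedXAxis, puncturedDiagonal, Set.mem_preimage, Set.mem_ofPred_eq,
    zsigma2inv]
  grind

theorem zsigma1inv_image_puncturedYAxis :
    zsigma1inv '' puncturedYAxis (ZMod p) = puncturedAntidiagonal (ZMod p) := by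
  ext v
  simp [image_zsigma1inv, puncturedYAxis, puncturedAntidiagonal, zsigma1, add_eq_zero_iff_eq_neg]

theorem zsigma2inv_image_puncturedXAxis :
    zsigma2inv '' puncturedXAxis (ZMod p) = puncturedAntidiagonal (ZMod p) := by
  ext v
  simp only [image_zsigma2inv, puncturedXAxis, puncturedAntidiagonal, Set.mem_preimage,
    Set.mem_ofPred_eq, zsigma2]
  grind

theorem ncard_puncturedDiagonal :
    (puncturedDiagonal (ZMod p)).ncard = (puncturedXAxis (ZMod p)).ncard := by
  rw [← zsigma2_image_puncturedXAxis,
    Set.ncard_image_of_injective _ (Function.LeftInverse.injective zsigma2inv_zsigma2)]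

theorem ncard_puncturedAntidiagonal :
    (puncturedAntidiagonal (ZMod p)).ncard = (puncturedXAxis (ZMod p)).ncard := by
  rw [← zsigma2inv_image_puncturedXAxis,
    Set.ncard_image_of_injective _ (Function.LeftInverse.injective zsigma2_zsigma2inv)]

theorem union_images_puncturedAxes :
    let S := puncturedXAxis (ZMod p) ∪ puncturedYAxis (ZMod p)
    S ∪ zsigma1 '' S ∪ zsigma2 '' S ∪ zsigma1inv '' S ∪ zsigma2inv '' S =
      puncturedXAxis (ZMod p) ∪ puncturedYAxis (ZMod p) ∪ puncturedDiagonal (ZMod p) ∪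
        puncturedAntidiagonal (ZMod p) := by
  simp only [Set.image_union, zsigma1_image_puncturedXAxis, zsigma1_image_puncturedYAxis,
    zsigma2_image_puncturedXAxis, zsigma2_image_puncturedYAxis, zsigma1inv_image_puncturedXAxis,
    zsigma1inv_image_puncturedYAxis, zsigma2inv_image_puncturedXAxis,
    zsigma2inv_image_puncturedYAxis]
  ext v
  simp only [Set.mem_union]
  tauto

end Shears

theorem undirected_isoperimetric_equality_general (p : ℕ) (hodd : Odd p)
    (S : Set (ZMod p × ZMod p))
    (hS : S = {v : ZMod p × ZMod p | (v.2 = 0 ∧ v.1 ≠ 0) ∨ (v.1 = 0 ∧ v.2 ≠ 0)}) :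
    (S ∪ zsigma1 '' S ∪ zsigma2 '' S ∪ zsigma1inv '' S ∪ zsigma2inv '' S).ncard
      = 2 * S.ncard := by
  have : NeZero p := ⟨hodd.pos.ne'⟩
  have h2 : IsUnit (2 : ZMod p) := by
    exact_mod_cast (ZMod.isUnit_iff_coprime 2 p).mpr (Nat.coprime_two_left.mpr hodd)
  obtain rfl : S = puncturedXAxis (ZMod p) ∪ puncturedYAxis (ZMod p) := hS
  rw [union_images_puncturedAxes, Set.ncard_union_eq (disjoint_puncturedAntidiagonal h2),
    Set.ncard_union_eq (disjoint_puncturedAxes_puncturedDiagonal _),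
    Set.ncard_union_eq (disjoint_puncturedXAxis_puncturedYAxis _), ncard_puncturedYAxis,
    ncard_puncturedDiagonal, ncard_puncturedAntidiagonal]
  ring

/-- For `S` the union of the two punctured coordinate axes in `(ℤ/pℤ)²`, the undirected
vertex-isoperimetric bound holds with equality: `|S ∪ σ₁(S) ∪ σ₂(S) ∪ σ₁⁻¹(S) ∪ σ₂⁻¹(S)| = 2|S|`. -/
theorem undirected_isoperimetric_equality (p : ℕ) (hp : p.Prime) (hodd : Odd p)
    (S : Set (ZMod p × ZMod p))
    (hS : S = {v : ZMod p × ZMod p | (v.2 = 0 ∧ v.1 ≠ 0) ∨ (v.1 = 0 ∧ v.2 ≠ 0)}) :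
    (S ∪ zsigma1 '' S ∪ zsigma2 '' S ∪ zsigma1inv '' S ∪ zsigma2inv '' S).ncard
      = 2 * S.ncard :=
  undirected_isoperimetric_equality_general p hodd S hS
end

section
/- Let p be an odd prime and let S = {(x,0) : x ∈ ℤ/pℤ, x ≠ 0} ∪ {(0,y) : y ∈ ℤ/pℤ, y ≠ 0} ∪ {(x,−x) : x ∈ ℤ/pℤ, x ≠ 0} ⊆ (ℤ/pℤ)². Then the cardinality of S ∪ σ₁(S) ∪ σ₂(S) equals (4/3)·|S| (i.e. 3·|S ∪ σ₁(S) ∪ σ₂(S)| = 4·|S|), where σ₁ = [[1,1],[0,1]] and σ₂ = [[1,0],[1,1]] act on (ℤ/pℤ)² by matrix-vector multiplication (so the directed vertex-isoperimetric bound holds with equality for S). -/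
/-!
`S` is the union of the punctured lines through the origin with directions `(1,0)`, `(0,1)` and
`(1,-1)`. Being linear, `σ₁` and `σ₂` map punctured lines to punctured lines, and both send these
three onto the two axes and the punctured diagonal. Hence `S ∪ σ₁(S) ∪ σ₂(S)` consists of four
punctured lines. Two punctured lines are disjoint as soon as their directions have a unit
determinant; for the diagonal and the anti-diagonal this determinant is `2`, a unit modulo an odd
`p`. Each punctured line has `p - 1` points, so the two sides are `3 · 4(p-1)` and `4 · 3(p-1)`.
-/

section PuncturedLine

variable {R : Type*} [CommRing R]

def puncturedLine (a b : R) : Set (R × R) := (fun t => (t * a, t * b)) '' {0}ᶜ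

lemma mem_puncturedLine_one_left {b : R} {v : R × R} :
    v ∈ puncturedLine 1 b ↔ v.1 ≠ 0 ∧ v.2 = v.1 * b := by
  simp [puncturedLine, Prod.ext_iff, eq_comm]

lemma mem_puncturedLine_zero_one {v : R × R} :
    v ∈ puncturedLine 0 1 ↔ v.1 = 0 ∧ v.2 ≠ 0 := by
  simp [puncturedLine, Prod.ext_iff, eq_comm, and_comm]

lemma puncturedLine_neg (a b : R) : puncturedLine (-a) (-b) = puncturedLine a b := by
  ext v
  constructor
  · rintro ⟨t, ht, rfl⟩
    exact ⟨-t, neg_ne_zero.mpr ht, by simp⟩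
  · rintro ⟨t, ht, rfl⟩
    exact ⟨-t, neg_ne_zero.mpr ht, by simp⟩

lemma disjoint_puncturedLine {a b c d : R} (h : IsUnit (a * d - b * c)) :
    Disjoint (puncturedLine a b) (puncturedLine c d) := by
  rw [Set.disjoint_left]
  rintro _ ⟨t, ht, rfl⟩ ⟨s, -, hs⟩
  simp only [Prod.ext_iff] at hs
  have : t * (a * d - b * c) = 0 := by linear_combination c * hs.2 - d * hs.1
  exact ht (h.mul_left_eq_zero.mp this)

lemma ncard_puncturedLine [Finite R] {a b : R} (h : IsUnit a ∨ IsUnit b) :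
    (puncturedLine a b).ncard = Nat.card R - 1 := by
  have hinj : Function.Injective fun t : R => (t * a, t * b) := by
    intro s t hst
    simp only [Prod.ext_iff] at hst
    rcases h with ha | hb
    · exact ha.mul_left_inj.mp hst.1
    · exact hb.mul_left_inj.mp hst.2
  rw [puncturedLine, Set.ncard_image_of_injective _ hinj, Set.ncard_compl, Set.ncard_singleton]

lemma ncard_axes_union_antidiagonal [Finite R] :
    (puncturedLine (1 : R) 0 ∪ puncturedLine 0 1 ∪ puncturedLine 1 (-1)).ncard =
      3 * (Nat.card R - 1) := by
  have hdisj₁ : Disjoint (puncturedLine (1 : R) 0) (puncturedLine 0 1) :=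
    disjoint_puncturedLine (by norm_num)
  have hdisj₂ : Disjoint (puncturedLine (1 : R) 0 ∪ puncturedLine 0 1) (puncturedLine 1 (-1)) :=
    Set.disjoint_union_left.2
      ⟨disjoint_puncturedLine (by norm_num), disjoint_puncturedLine (by norm_num)⟩
  rw [Set.ncard_union_eq hdisj₂, Set.ncard_union_eq hdisj₁]
  simp only [ncard_puncturedLine, isUnit_one, true_or, or_true]
  ring

lemma ncard_axes_union_antidiagonal_union_diagonal [Finite R] (h2 : IsUnit (2 : R)) :
    (puncturedLine (1 : R) 0 ∪ puncturedLine 0 1 ∪ puncturedLine 1 (-1) ∪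
      puncturedLine 1 1).ncard = 4 * (Nat.card R - 1) := by
  have hdisj : Disjoint (puncturedLine (1 : R) 0 ∪ puncturedLine 0 1 ∪ puncturedLine 1 (-1))
      (puncturedLine 1 1) :=
    Set.disjoint_union_left.2 ⟨Set.disjoint_union_left.2
      ⟨disjoint_puncturedLine (by norm_num), disjoint_puncturedLine (by norm_num)⟩,
      disjoint_puncturedLine (by norm_num [h2])⟩
  rw [Set.ncard_union_eq hdisj, ncard_axes_union_antidiagonal,
    ncard_puncturedLine (Or.inl isUnit_one)]
  ring

end PuncturedLine

section Shears

variable {p : ℕ}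

lemma image_zsigma1_puncturedLine (a b : ZMod p) :
    zsigma1 '' puncturedLine a b = puncturedLine (a + b) b := by
  simp only [puncturedLine, Set.image_image, zsigma1, mul_add]

lemma image_zsigma2_puncturedLine (a b : ZMod p) :
    zsigma2 '' puncturedLine a b = puncturedLine a (a + b) := by
  simp only [puncturedLine, Set.image_image, zsigma2, mul_add]

lemma image_zsigma1_axes_union_antidiagonal :
    zsigma1 '' (puncturedLine (1 : ZMod p) 0 ∪ puncturedLine 0 1 ∪ puncturedLine 1 (-1)) =
      puncturedLine 1 0 ∪ puncturedLine 1 1 ∪ puncturedLine 0 1 := by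
  have h : puncturedLine (0 : ZMod p) (-1) = puncturedLine 0 1 := by
    simpa using puncturedLine_neg (0 : ZMod p) 1
  simp only [Set.image_union, image_zsigma1_puncturedLine, add_zero, zero_add, add_neg_cancel, h]

lemma image_zsigma2_axes_union_antidiagonal :
    zsigma2 '' (puncturedLine (1 : ZMod p) 0 ∪ puncturedLine 0 1 ∪ puncturedLine 1 (-1)) =
      puncturedLine 1 1 ∪ puncturedLine 0 1 ∪ puncturedLine 1 0 := by
  simp only [Set.image_union, image_zsigma2_puncturedLine, add_zero, zero_add, add_neg_cancel]

end Shears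

lemma ZMod.isUnit_two_of_odd {p : ℕ} (hodd : Odd p) : IsUnit (2 : ZMod p) := by
  exact_mod_cast (ZMod.isUnit_iff_coprime 2 p).mpr (Nat.coprime_two_left.mpr hodd)

theorem directed_isoperimetric_equality_general (p : ℕ) (hodd : Odd p)
    (S : Set (ZMod p × ZMod p))
    (hS : S = {v : ZMod p × ZMod p | (v.2 = 0 ∧ v.1 ≠ 0) ∨ (v.1 = 0 ∧ v.2 ≠ 0) ∨
      (v.2 = -v.1 ∧ v.1 ≠ 0)}) :
    3 * (S ∪ zsigma1 '' S ∪ zsigma2 '' S).ncard = 4 * S.ncard := by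
  have hS' : S = puncturedLine 1 0 ∪ puncturedLine 0 1 ∪ puncturedLine 1 (-1) := by
    ext v
    simp only [hS, Set.mem_union, mem_puncturedLine_one_left, mem_puncturedLine_zero_one,
      Set.mem_ofPred_eq, mul_zero, mul_neg_one]
    tauto
  have hU : S ∪ zsigma1 '' S ∪ zsigma2 '' S =
      puncturedLine 1 0 ∪ puncturedLine 0 1 ∪ puncturedLine 1 (-1) ∪ puncturedLine 1 1 := by
    rw [hS', image_zsigma1_axes_union_antidiagonal, image_zsigma2_axes_union_antidiagonal]
    ext v
    simp only [Set.mem_union]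
    tauto
  have : NeZero p := ⟨hodd.pos.ne'⟩
  rw [hU, hS', ncard_axes_union_antidiagonal_union_diagonal (ZMod.isUnit_two_of_odd hodd),
    ncard_axes_union_antidiagonal]
  ring

/-- For `S` the union of the two punctured coordinate axes and the punctured anti-diagonal in
`(ℤ/pℤ)²`, the directed vertex-isoperimetric bound holds with equality:
`3·|S ∪ σ₁(S) ∪ σ₂(S)| = 4·|S|`. -/
theorem directed_isoperimetric_equality (p : ℕ) (hp : p.Prime) (hodd : Odd p)
    (S : Set (ZMod p × ZMod p))
    (hS : S = {v : ZMod p × ZMod p | (v.2 = 0 ∧ v.1 ≠ 0) ∨ (v.1 = 0 ∧ v.2 ≠ 0) ∨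
      (v.2 = -v.1 ∧ v.1 ≠ 0)}) :
    3 * (S ∪ zsigma1 '' S ∪ zsigma2 '' S).ncard = 4 * S.ncard :=
  directed_isoperimetric_equality_general p hodd S hS
end
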